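/- Decision soundness (F case): given a sound verifier V, if the decision judgment P ⇒ ⟨p*, q⟩ ⇓ F is derivable, then P ⊭ p*. -/

import Mathlib

/-- The assumed program: executions of `P` satisfying all predicates in `A`. -/
def Asm {E : Type*} (P : Set E) (A : Set (E → Prop)) : Set E :=
  {e ∈ P | ∀ q ∈ A, q e}

/-- `P ⊨_A p`: every execution of `Asm P A` satisfies `p`. -/
def Models {E : Type*} (P : Set E) (A : Set (E → Prop)) (p : E → Prop) : Prop :=
  ∀ e ∈ Asm P A, p e

/-- Verifier outcomes. -/
inductive Outcome | T | F | U
deriving DecidableEq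

/-- The decision judgment `P ⇒ ⟨p*, q⟩ ⇓ d`, defined by rules DEC-FALSE, DEC-PROP, DEC-U. -/
inductive Decide {E : Type*} (V : Set E → Set (E → Prop) → (E → Prop) → Outcome)
    (P : Set E) (pstar q : E → Prop) : Outcome → Prop
  | decFalse : V P {q} pstar = .F → Decide V P pstar q .F
  | decProp (d : Outcome) : V P ∅ q = .T → V P {q} pstar = d →
      (d = .T ∨ d = .U) → Decide V P pstar q d
  | decU : V P ∅ q ≠ .T → V P {q} pstar ≠ .F → Decide V P pstar q .U

theorem Asm_subset_Asm {E : Type*} (P : Set E) {A B : Set (E → Prop)} (h : A ⊆ B) :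
    Asm P B ⊆ Asm P A :=
  fun _ he => ⟨he.1, fun q hq => he.2 q (h hq)⟩

theorem Models.mono {E : Type*} {P : Set E} {A B : Set (E → Prop)} {p : E → Prop} (h : A ⊆ B)
    (hm : Models P A p) : Models P B p :=
  fun e he => hm e (Asm_subset_Asm P h he)

theorem Decide.verifier_eq_F {E : Type*} {V : Set E → Set (E → Prop) → (E → Prop) → Outcome}
    {P : Set E} {pstar q : E → Prop} (h : Decide V P pstar q .F) : V P {q} pstar = .F := by
  cases h with
  | decFalse hv => exact hv
  | decProp _ _ _ hd => simp at hd

theorem stmt5_general {E : Type*} (V : Set E → Set (E → Prop) → (E → Prop) → Outcome)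
    (P : Set E) (pstar q : E → Prop)
    (hF : ∀ A p, V P A p = .F → ¬ Models P A p)
    (h : Decide V P pstar q .F) : ¬ Models P ∅ pstar :=
  fun hm => hF {q} pstar h.verifier_eq_F (hm.mono (Set.empty_subset _))

/-- Decision soundness (F case): a derivable outcome F means P ⊭ p*. -/
theorem stmt5 {E : Type*} (V : Set E → Set (E → Prop) → (E → Prop) → Outcome)
    (P : Set E) (pstar q : E → Prop)
    (hT : ∀ A p, V P A p = .T → Models P A p)
    (hF : ∀ A p, V P A p = .F → ¬ Models P A p)
    (h : Decide V P pstar q .F) : ¬ Models P ∅ pstar :=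
  stmt5_general V P pstar q hF h
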